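/- arXiv:1412.2669 — 2 statements merged into one kernel-verified Lean document; each statement's English description precedes it below -/
import Mathlib

section
/- Suppose Φ satisfies the restricted isometry property of order k with constant δ_k < 1, and X is k-jointly sparse with SVD X = U Σ Vᴴ. Then every column of U Σ is k-sparse, and the matrix R = Φ U Σ satisfies σ_max(R) ≤ √(1+δ_k)·σ_max(X) and σ_min(R) ≥ √(1−δ_k)·σ_min(X); consequently κ(R) ≤ √((1+δ_k)/(1−δ_k))·κ(X). -/
set_option maxHeartbeats 1000000

open Matrix

lemma sum_sq_norm_eq (m : ℕ) (y : Fin m → ℂ) : (∑ i, ‖y i‖ ^ 2 : ℝ) = (star y ⬝ᵥ y).re := by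
  simp only [dotProduct, Pi.star_apply, Complex.re_sum]
  congr 1; ext i
  rw [Complex.star_def, ← Complex.normSq_eq_conj_mul_self]
  simp [Complex.normSq_eq_norm_sq, ← Complex.ofReal_pow]

lemma unitary_dot {n r : ℕ} (U : Matrix (Fin n) (Fin r) ℂ) (hU : Uᴴ * U = 1) (w : Fin r → ℂ) :
    star (U *ᵥ w) ⬝ᵥ (U *ᵥ w) = star w ⬝ᵥ w := by
  rw [star_mulVec, dotProduct_mulVec, vecMul_vecMul, hU, vecMul_one]

lemma Mnorm {n r : ℕ} (U : Matrix (Fin n) (Fin r) ℂ) (hU : Uᴴ * U = 1)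
    (σ : Fin r → ℝ) (hσ : ∀ i, 0 < σ i) (v : Fin r → ℂ) :
    (∑ i, ‖((U * Matrix.diagonal (fun i => (σ i : ℂ))) *ᵥ v) i‖ ^ 2 : ℝ)
      = ∑ i, σ i ^ 2 * ‖v i‖ ^ 2 := by
  rw [sum_sq_norm_eq, ← mulVec_mulVec, unitary_dot U hU, ← sum_sq_norm_eq]
  congr 1; ext i
  rw [mulVec_diagonal]
  simp [norm_mul, mul_pow, abs_of_pos (hσ i)]

/-- If Φ satisfies the RIP of order k with constant δ < 1 and X is k-jointly sparse with
skinny SVD X = U Σ Vᴴ, then every column of U Σ is k-sparse, and R = Φ U Σ satisfies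
σ_max(R) ≤ √(1+δ)·σ_max(X), σ_min(R) ≥ √(1−δ)·σ_min(X) and
κ(R) ≤ √((1+δ)/(1−δ))·κ(X), where the singular values of X coincide with those of U Σ
(so extreme singular values are expressed as sup/inf of ‖·v‖ over unit vectors v). -/
theorem rip_condition_number_bound
    {n N s r k : ℕ} (hr : 0 < r)
    (δ : ℝ) (hδ0 : 0 ≤ δ) (hδ1 : δ < 1)
    (Φ : Matrix (Fin s) (Fin n) ℂ)
    (hRIP : ∀ x : Fin n → ℂ, {i | x i ≠ 0}.ncard ≤ k →
      (1 - δ) * (∑ i, ‖x i‖ ^ 2) ≤ (∑ a, ‖(Φ *ᵥ x) a‖ ^ 2) ∧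
      (∑ a, ‖(Φ *ᵥ x) a‖ ^ 2) ≤ (1 + δ) * (∑ i, ‖x i‖ ^ 2))
    (U : Matrix (Fin n) (Fin r) ℂ) (V : Matrix (Fin N) (Fin r) ℂ)
    (σ : Fin r → ℝ) (hσ : ∀ i, 0 < σ i)
    (S : Matrix (Fin r) (Fin r) ℂ) (hS : S = Matrix.diagonal fun i => (σ i : ℂ))
    (hU : Uᴴ * U = 1) (hV : Vᴴ * V = 1)
    (X : Matrix (Fin n) (Fin N) ℂ) (hX : X = U * S * Vᴴ)
    (hjs : {i | ∃ j, X i j ≠ 0}.ncard ≤ k)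
    (R : Matrix (Fin s) (Fin r) ℂ) (hR : R = Φ * U * S)
    (smaxX sminX smaxR sminR : ℝ)
    (hsmaxX : smaxX = sSup {t : ℝ | ∃ v : Fin r → ℂ,
      (∑ i, ‖v i‖ ^ 2) = 1 ∧ t = Real.sqrt (∑ i, ‖((U * S) *ᵥ v) i‖ ^ 2)})
    (hsminX : sminX = sInf {t : ℝ | ∃ v : Fin r → ℂ,
      (∑ i, ‖v i‖ ^ 2) = 1 ∧ t = Real.sqrt (∑ i, ‖((U * S) *ᵥ v) i‖ ^ 2)})
    (hsmaxR : smaxR = sSup {t : ℝ | ∃ v : Fin r → ℂ,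
      (∑ i, ‖v i‖ ^ 2) = 1 ∧ t = Real.sqrt (∑ a, ‖(R *ᵥ v) a‖ ^ 2)})
    (hsminR : sminR = sInf {t : ℝ | ∃ v : Fin r → ℂ,
      (∑ i, ‖v i‖ ^ 2) = 1 ∧ t = Real.sqrt (∑ a, ‖(R *ᵥ v) a‖ ^ 2)}) :
    (∀ l : Fin r, {i | (U * S) i l ≠ 0}.ncard ≤ k) ∧
    smaxR ≤ Real.sqrt (1 + δ) * smaxX ∧
    Real.sqrt (1 - δ) * sminX ≤ sminR ∧
    smaxR / sminR ≤ Real.sqrt ((1 + δ) / (1 - δ)) * (smaxX / sminX) := by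
  haveI : NeZero r := ⟨hr.ne'⟩
  set M := U * S with hM
  have hMX : M = X * V := by
    rw [hX, Matrix.mul_assoc, hV, Matrix.mul_one]
  have hsupp : ∀ v : Fin r → ℂ, {i | (M *ᵥ v) i ≠ 0}.ncard ≤ k := by
    intro v
    refine le_trans (Set.ncard_le_ncard ?_ (Set.toFinite _)) hjs
    intro i hi
    simp only [Set.mem_setOf_eq] at hi ⊢
    by_contra h
    push_neg at h
    apply hi
    rw [hMX, ← mulVec_mulVec]
    simp [mulVec, dotProduct, h]
  have part1 : ∀ l : Fin r, {i | M i l ≠ 0}.ncard ≤ k := by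
    intro l
    have he : {i | M i l ≠ 0} = {i | (M *ᵥ Pi.single l 1) i ≠ 0} := by
      ext i
      simp [mulVec_single]
    rw [he]; exact hsupp _
  have hMn : ∀ v : Fin r → ℂ, (∑ i, ‖(M *ᵥ v) i‖ ^ 2 : ℝ) = ∑ i, σ i ^ 2 * ‖v i‖ ^ 2 := by
    intro v; rw [hM, hS]; exact Mnorm U hU σ hσ v
  have hRv : ∀ v : Fin r → ℂ, R *ᵥ v = Φ *ᵥ (M *ᵥ v) := by
    intro v; rw [hR, hM, mulVec_mulVec, Matrix.mul_assoc]
  have hRIP' : ∀ v : Fin r → ℂ,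
      (1 - δ) * (∑ i, ‖(M *ᵥ v) i‖ ^ 2) ≤ (∑ a, ‖(R *ᵥ v) a‖ ^ 2) ∧
      (∑ a, ‖(R *ᵥ v) a‖ ^ 2) ≤ (1 + δ) * (∑ i, ‖(M *ᵥ v) i‖ ^ 2) := by
    intro v; rw [hRv]; exact hRIP _ (hsupp v)
  -- unit vector
  set v0 : Fin r → ℂ := Pi.single 0 1 with hv0def
  have hv0 : (∑ i, ‖v0 i‖ ^ 2 : ℝ) = 1 := by
    rw [hv0def]
    rw [Finset.sum_eq_single 0]
    · simp
    · intro b _ hb; simp [Pi.single_eq_of_ne hb]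
    · simp
  set XS := {t : ℝ | ∃ v : Fin r → ℂ,
      (∑ i, ‖v i‖ ^ 2) = 1 ∧ t = Real.sqrt (∑ i, ‖(M *ᵥ v) i‖ ^ 2)} with hXS
  set RS := {t : ℝ | ∃ v : Fin r → ℂ,
      (∑ i, ‖v i‖ ^ 2) = 1 ∧ t = Real.sqrt (∑ a, ‖(R *ᵥ v) a‖ ^ 2)} with hRS
  have hXne : XS.Nonempty := ⟨_, v0, hv0, rfl⟩
  have hRne : RS.Nonempty := ⟨_, v0, hv0, rfl⟩
  have hune : (Finset.univ : Finset (Fin r)).Nonempty := Finset.univ_nonempty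
  set σmax := Finset.univ.sup' hune σ with hσmax
  set σ0 := Finset.univ.inf' hune σ with hσ0
  have hσ0pos : 0 < σ0 := by
    rw [hσ0, Finset.lt_inf'_iff]
    intro i _; exact hσ i
  have hσmax_nonneg : 0 ≤ σmax := by
    obtain ⟨i, hi⟩ := hune
    exact le_trans (hσ i).le (Finset.le_sup' σ hi)
  have hXub : ∀ t ∈ XS, t ≤ σmax := by
    rintro t ⟨v, hv, rfl⟩
    rw [hMn]
    have h1 : (∑ i, σ i ^ 2 * ‖v i‖ ^ 2 : ℝ) ≤ σmax ^ 2 := by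
      calc (∑ i, σ i ^ 2 * ‖v i‖ ^ 2 : ℝ) ≤ ∑ i, σmax ^ 2 * ‖v i‖ ^ 2 := by
            apply Finset.sum_le_sum
            intro i _
            have : σ i ≤ σmax := Finset.le_sup' σ (Finset.mem_univ i)
            have h2 : σ i ^ 2 ≤ σmax ^ 2 := pow_le_pow_left₀ (hσ i).le this 2
            exact mul_le_mul_of_nonneg_right h2 (sq_nonneg _)
        _ = σmax ^ 2 := by rw [← Finset.mul_sum, hv, mul_one]
    calc Real.sqrt (∑ i, σ i ^ 2 * ‖v i‖ ^ 2) ≤ Real.sqrt (σmax ^ 2) := Real.sqrt_le_sqrt h1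
      _ = σmax := Real.sqrt_sq hσmax_nonneg
  have hXlb : ∀ t ∈ XS, σ0 ≤ t := by
    rintro t ⟨v, hv, rfl⟩
    rw [hMn]
    have h1 : (σ0 ^ 2 : ℝ) ≤ ∑ i, σ i ^ 2 * ‖v i‖ ^ 2 := by
      calc (σ0 ^ 2 : ℝ) = ∑ i, σ0 ^ 2 * ‖v i‖ ^ 2 := by rw [← Finset.mul_sum, hv, mul_one]
        _ ≤ ∑ i, σ i ^ 2 * ‖v i‖ ^ 2 := by
            apply Finset.sum_le_sum
            intro i _
            have : σ0 ≤ σ i := Finset.inf'_le σ (Finset.mem_univ i)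
            exact mul_le_mul_of_nonneg_right (pow_le_pow_left₀ hσ0pos.le this 2) (sq_nonneg _)
    calc σ0 = Real.sqrt (σ0 ^ 2) := (Real.sqrt_sq hσ0pos.le).symm
      _ ≤ Real.sqrt (∑ i, σ i ^ 2 * ‖v i‖ ^ 2) := Real.sqrt_le_sqrt h1
  have hbddX : BddAbove XS := ⟨σmax, hXub⟩
  have hbelowX : BddBelow XS := ⟨σ0, hXlb⟩
  have hsminX_pos : 0 < sminX :=
    lt_of_lt_of_le hσ0pos (hsminX ▸ le_csInf hXne hXlb)
  have hsmaxX_pos : 0 < smaxX := by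
    obtain ⟨t0, ht0⟩ := hXne
    have := hXlb t0 ht0
    have h2 : t0 ≤ smaxX := hsmaxX ▸ le_csSup hbddX ht0
    linarith
  have hRub : ∀ t ∈ RS, t ≤ Real.sqrt (1 + δ) * smaxX := by
    rintro t ⟨v, hv, rfl⟩
    have h := (hRIP' v).2
    have hXv : Real.sqrt (∑ i, ‖(M *ᵥ v) i‖ ^ 2) ≤ smaxX :=
      hsmaxX ▸ le_csSup hbddX ⟨v, hv, rfl⟩
    calc Real.sqrt (∑ a, ‖(R *ᵥ v) a‖ ^ 2)
        ≤ Real.sqrt ((1 + δ) * ∑ i, ‖(M *ᵥ v) i‖ ^ 2) := Real.sqrt_le_sqrt h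
      _ = Real.sqrt (1 + δ) * Real.sqrt (∑ i, ‖(M *ᵥ v) i‖ ^ 2) := Real.sqrt_mul (by linarith) _
      _ ≤ Real.sqrt (1 + δ) * smaxX := mul_le_mul_of_nonneg_left hXv (Real.sqrt_nonneg _)
  have part2 : smaxR ≤ Real.sqrt (1 + δ) * smaxX := hsmaxR ▸ csSup_le hRne hRub
  have part3 : Real.sqrt (1 - δ) * sminX ≤ sminR := by
    rw [hsminR]
    apply le_csInf hRne
    rintro t ⟨v, hv, rfl⟩
    have h := (hRIP' v).1
    have hXv : sminX ≤ Real.sqrt (∑ i, ‖(M *ᵥ v) i‖ ^ 2) :=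
      hsminX ▸ csInf_le hbelowX ⟨v, hv, rfl⟩
    calc Real.sqrt (1 - δ) * sminX
        ≤ Real.sqrt (1 - δ) * Real.sqrt (∑ i, ‖(M *ᵥ v) i‖ ^ 2) :=
          mul_le_mul_of_nonneg_left hXv (Real.sqrt_nonneg _)
      _ = Real.sqrt ((1 - δ) * ∑ i, ‖(M *ᵥ v) i‖ ^ 2) := (Real.sqrt_mul (by linarith) _).symm
      _ ≤ Real.sqrt (∑ a, ‖(R *ᵥ v) a‖ ^ 2) := Real.sqrt_le_sqrt h
  refine ⟨part1, part2, part3, ?_⟩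
  have hsminR_pos : 0 < sminR := by
    have h1 : 0 < Real.sqrt (1 - δ) * sminX :=
      mul_pos (Real.sqrt_pos.2 (by linarith)) hsminX_pos
    linarith
  have hkey : smaxR / sminR ≤ (Real.sqrt (1 + δ) * smaxX) / (Real.sqrt (1 - δ) * sminX) := by
    apply div_le_div₀ (by positivity) part2 (mul_pos (Real.sqrt_pos.2 (by linarith)) hsminX_pos) part3
  calc smaxR / sminR ≤ (Real.sqrt (1 + δ) * smaxX) / (Real.sqrt (1 - δ) * sminX) := hkey
    _ = Real.sqrt ((1 + δ) / (1 - δ)) * (smaxX / sminX) := by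
        rw [Real.sqrt_div (by linarith), mul_div_mul_comm]
end

section
/- A matrix A ∈ ℂ^{s×n} satisfies spark(A) ≥ 2k+1 if and only if every k-sparse vector x ∈ ℂⁿ is uniquely determined by A x among k-sparse vectors (i.e., A is injective on the set of k-sparse vectors). -/
/-!
If `A x = A y` for `k`-sparse `x, y`, then `x - y` is a `2k`-sparse vector in the kernel.
Conversely, a `2k`-sparse `x` in the kernel splits as `x = u + v` with `u, v` both `k`-sparse,
and then `A u = A (-v)` forces `u = -v`, i.e. `x = 0`.
-/

open Function

section Sparse

variable {ι G : Type*} [Finite ι]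

theorem ncard_support_sub_le [SubtractionMonoid G] (x y : ι → G) :
    (support (x - y)).ncard ≤ (support x).ncard + (support y).ncard :=
  (Set.ncard_le_ncard (support_sub x y)).trans (Set.ncard_union_le _ _)

theorem exists_add_eq_of_ncard_support_le [AddZeroClass G] {x : ι → G} {a b : ℕ}
    (hx : (support x).ncard ≤ a + b) :
    ∃ u v : ι → G, (support u).ncard ≤ a ∧ (support v).ncard ≤ b ∧ u + v = x := by
  obtain ⟨T, hT, hTcard⟩ := Set.exists_subset_card_eq (min_le_right a (support x).ncard)
  refine ⟨T.indicator x, Tᶜ.indicator x, ?_, ?_, Set.indicator_self_add_compl T x⟩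
  · rw [Set.support_indicator]
    exact (Set.ncard_le_ncard Set.inter_subset_left).trans (hTcard.trans_le (min_le_left _ _))
  · rw [Set.support_indicator, Set.inter_comm, ← Set.sdiff_eq, Set.ncard_sdiff hT]
    omega

theorem sparse_ker_trivial_iff_injective_on_sparse [AddGroup G] {H : Type*} [AddGroup H]
    (f : (ι → G) →+ H) (a b : ℕ) :
    (∀ x, (support x).ncard ≤ a + b → f x = 0 → x = 0) ↔
      ∀ x y, (support x).ncard ≤ a → (support y).ncard ≤ b → f x = f y → x = y := by
  constructor
  · intro hker x y hx hy hxy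
    have hsub : f (x - y) = 0 := by rw [map_sub, hxy, sub_self]
    exact sub_eq_zero.mp (hker _ ((ncard_support_sub_le x y).trans (add_le_add hx hy)) hsub)
  · intro hinj x hx hfx
    obtain ⟨u, v, hu, hv, rfl⟩ := exists_add_eq_of_ncard_support_le hx
    have huv : f u = f (-v) := by rw [map_neg, eq_neg_iff_add_eq_zero, ← map_add, hfx]
    rw [hinj u (-v) hu (by rwa [support_neg]) huv, neg_add_cancel]

end Sparse

open Matrix

/-- A matrix A satisfies spark(A) ≥ 2k+1 (i.e. no nonzero 2k-sparse vector lies in its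
kernel) if and only if A is injective on the set of k-sparse vectors. -/
theorem spark_iff_injective_on_sparse
    {s n k : ℕ} (A : Matrix (Fin s) (Fin n) ℂ) :
    (∀ x : Fin n → ℂ, {i | x i ≠ 0}.ncard ≤ 2 * k → A *ᵥ x = 0 → x = 0) ↔
    (∀ x y : Fin n → ℂ, {i | x i ≠ 0}.ncard ≤ k → {i | y i ≠ 0}.ncard ≤ k →
      A *ᵥ x = A *ᵥ y → x = y) := by
  rw [two_mul]
  exact sparse_ker_trivial_iff_injective_on_sparse A.mulVecLin.toAddMonoidHom k k
end
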